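/- Let $N \geq 2$ be even, let $a_1,\dots,a_N$ be real constants, and let $x_1,\dots,x_N : J \to \mathbb{R}$ be differentiable functions on an open interval $J$ satisfying the ordered mCH $N$-peakon system. Let $I_N(x_1,\dots,x_N) = \sum_{1 \le i < j \le N} \big( 3 a_i a_j e^{-(x_i - x_j)} + (-1)^{i+j}(a_j^2 x_i - a_i^2 x_j) \big)$. Then the system is Hamiltonian with Hamiltonian $H = \tfrac{4}{3} I_N$ and Poisson bracket $\{x_i, x_j\} = \tfrac{1}{2}\mathrm{sgn}(x_i - x_j)$: for each $i$ and all $t \in J$, $\dot x_i(t) = \tfrac{2}{3} \sum_{j=1}^{N} \mathrm{sgn}(x_i(t) - x_j(t)) \, \frac{\partial I_N}{\partial x_j}(x_1(t),\dots,x_N(t))$. -/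

import Mathlib

/-!
Along an ordered solution, `sgn (xᵢ - xⱼ) = sgn (j - i)`, so the right-hand side is the
sign-weighted gradient `∑ⱼ sgn (j - i) ∂ⱼ I_N`, and it splits over the pair terms of `I_N`.
For the exponential pair term `(p, q)` the two partial derivatives are opposite, so the pair
contributes `(sgn (q - i) - sgn (p - i))` times its value: nothing unless `p ≤ i ≤ q`, which
gives exactly the interaction terms of `ẋᵢ`. For the linear pair terms, the coefficient of
`a_m²` is an alternating sum of signs whose prefix sums have a closed form; since `N` is even
the whole alternating sum equals `1`, and the coefficient collapses to `δ_{mi}`, leaving the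
kinetic term `aᵢ²`.
-/

open Finset

/-- The position-ordered conserved quantity `I_N`, viewed as a function of the
positions `y : ℕ → ℝ` (with the amplitudes `a` held fixed). -/
noncomputable def INordered (N : ℕ) (a : ℕ → ℝ) (y : ℕ → ℝ) : ℝ :=
  ∑ i ∈ Finset.Icc 1 N, ∑ j ∈ (Finset.Icc 1 N).filter (fun j => i < j),
    (3 * a i * a j * Real.exp (-(y i - y j))
      + (-1 : ℝ) ^ (i + j) * (a j ^ 2 * y i - a i ^ 2 * y j))

section Pairs

variable {α M : Type*} [LinearOrder α] [AddCommMonoid M]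

theorem Finset.sum_erase_eq_sum_filter_lt_add_sum_filter_gt (s : Finset α) (f : α → M) (m : α) :
    ∑ p ∈ s.erase m, f p = ∑ p ∈ s with p < m, f p + ∑ p ∈ s with m < p, f p := by
  rw [← sum_filter_add_sum_filter_not (s.erase m) (· < m)]
  congr 1 <;> apply sum_congr _ fun _ _ => rfl <;> ext p <;>
    simp only [mem_filter, mem_erase, not_lt, ne_eq]
  · exact ⟨fun h => ⟨h.1.2, h.2⟩, fun h => ⟨⟨h.2.ne, h.1⟩, h.2⟩⟩
  · exact ⟨fun h => ⟨h.1.2, lt_of_le_of_ne h.2 (Ne.symm h.1.1)⟩,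
      fun h => ⟨⟨h.2.ne', h.1⟩, h.2.le⟩⟩

theorem Finset.sum_sum_filter_lt_comm (s : Finset α) (f : α → α → M) :
    ∑ q ∈ s, ∑ p ∈ s with p < q, f p q = ∑ p ∈ s, ∑ q ∈ s with p < q, f p q := by
  simp_rw [sum_filter]
  exact sum_comm

theorem Finset.sum_pairs_ite_eq_add_ite_eq (s : Finset α) {j : α} (hj : j ∈ s)
    (A B : α → α → M) :
    ∑ p ∈ s, ∑ q ∈ s with p < q, ((if p = j then A p q else 0) + (if q = j then B p q else 0))
      = ∑ q ∈ s with j < q, A j q + ∑ p ∈ s with p < j, B p j := by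
  rw [sum_congr rfl fun p _ => sum_add_distrib, sum_add_distrib]
  congr 1
  · rw [sum_eq_single_of_mem j hj fun p _ hp => by simp [hp]]
    simp
  · simp [sum_ite_eq', sum_filter, hj]

theorem Finset.sum_mul_add_sum_filter_lt {R : Type*} [NonUnitalNonAssocSemiring R]
    (s : Finset α) (σ : α → R) (A B : α → α → R) :
    ∑ j ∈ s, σ j * (∑ q ∈ s with j < q, A j q + ∑ p ∈ s with p < j, B p j)
      = ∑ p ∈ s, ∑ q ∈ s with p < q, (σ p * A p q + σ q * B p q) := by
  simp_rw [mul_add, sum_add_distrib, mul_sum]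
  rw [sum_sum_filter_lt_comm s (fun p q => σ q * B p q)]

end Pairs

open Function in
theorem hasDerivAt_sum_pairs_update {ι : Type*} [LinearOrder ι] (s : Finset ι)
    (F F₁ F₂ : ι → ι → ℝ → ℝ → ℝ)
    (hF₁ : ∀ p q u v, HasDerivAt (F p q · v) (F₁ p q u v) u)
    (hF₂ : ∀ p q u v, HasDerivAt (F p q u ·) (F₂ p q u v) v)
    (y : ι → ℝ) {j : ι} (hj : j ∈ s) :
    HasDerivAt (fun r => ∑ p ∈ s, ∑ q ∈ s with p < q, F p q (update y j r p) (update y j r q))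
      (∑ q ∈ s with j < q, F₁ j q (y j) (y q) + ∑ p ∈ s with p < j, F₂ p j (y p) (y j)) (y j) := by
  have hterm : ∀ p q, p < q → HasDerivAt (fun r => F p q (update y j r p) (update y j r q))
      ((if p = j then F₁ p q (y p) (y q) else 0) + (if q = j then F₂ p q (y p) (y q) else 0))
      (y j) := by
    intro p q hpq
    by_cases hp : p = j
    · subst hp
      simpa [hpq.ne'] using hF₁ p q (y p) (y q)
    · by_cases hq : q = j
      · subst hq
        simpa [hp] using hF₂ p q (y p) (y q)
      · simpa [hp, hq] using hasDerivAt_const (y j) (F p q (y p) (y q))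
  exact (HasDerivAt.fun_sum fun p _ => HasDerivAt.fun_sum fun q hq =>
    hterm p q (mem_filter.1 hq).2).congr_deriv (sum_pairs_ite_eq_add_ite_eq s hj _ _)

noncomputable def partialINordered (N : ℕ) (a y : ℕ → ℝ) (j : ℕ) : ℝ :=
  ∑ q ∈ Icc 1 N with j < q,
      (-(3 * a j * a q * Real.exp (-(y j - y q))) + (-1) ^ (j + q) * a q ^ 2)
    + ∑ p ∈ Icc 1 N with p < j,
      (3 * a p * a j * Real.exp (-(y p - y j)) - (-1) ^ (p + j) * a p ^ 2)

theorem hasDerivAt_INordered_update (N : ℕ) (a y : ℕ → ℝ) {j : ℕ} (hj : j ∈ Icc 1 N) :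
    HasDerivAt (fun r => INordered N a (Function.update y j r))
      (partialINordered N a y j) (y j) := by
  refine hasDerivAt_sum_pairs_update (Icc 1 N)
    (fun p q u v =>
      3 * a p * a q * Real.exp (-(u - v)) + (-1) ^ (p + q) * (a q ^ 2 * u - a p ^ 2 * v))
    (fun p q u v => -(3 * a p * a q * Real.exp (-(u - v))) + (-1) ^ (p + q) * a q ^ 2)
    (fun p q u v => 3 * a p * a q * Real.exp (-(u - v)) - (-1) ^ (p + q) * a p ^ 2)
    (fun p q u v => ?_) (fun p q u v => ?_) y hj
  · exact ((((hasDerivAt_id' u).sub_const v).fun_neg.exp.const_mul (3 * a p * a q)).fun_add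
      ((((hasDerivAt_id' u).const_mul (a q ^ 2)).sub_const (a p ^ 2 * v)).const_mul
        ((-1 : ℝ) ^ (p + q)))).congr_deriv (by ring)
  · exact ((((hasDerivAt_id' v).const_sub u).fun_neg.exp.const_mul (3 * a p * a q)).fun_add
      ((((hasDerivAt_id' v).const_mul (a p ^ 2)).const_sub (a q ^ 2 * u)).const_mul
        ((-1 : ℝ) ^ (p + q)))).congr_deriv (by ring)

theorem Real.sign_natCast_sub_natCast (p i : ℕ) :
    Real.sign ((p : ℝ) - i) = if p < i then -1 else if p = i then 0 else 1 := by
  rcases lt_trichotomy p i with h | rfl | h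
  · simp [h, Real.sign_of_neg (sub_neg.2 (Nat.cast_lt.2 h))]
  · simp
  · simp [h.not_gt, h.ne', Real.sign_of_pos (sub_pos.2 (Nat.cast_lt.2 h))]

theorem sign_sub_eq_sign_natCast_sub {s : Finset ℕ} {y : ℕ → ℝ}
    (hy : ∀ i ∈ s, ∀ j ∈ s, i < j → y j < y i) {i j : ℕ} (hi : i ∈ s) (hj : j ∈ s) :
    Real.sign (y i - y j) = Real.sign ((j : ℝ) - i) := by
  rw [Real.sign_natCast_sub_natCast]
  rcases lt_trichotomy j i with h | rfl | h
  · simp [h, Real.sign_of_neg (sub_neg.2 (hy j hj i hi h))]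
  · simp
  · simp [h.not_gt, h.ne', Real.sign_of_pos (sub_pos.2 (hy i hi j hj h))]

theorem sum_pairs_sign_sub_sign_mul (s : Finset ℕ) {i : ℕ} (hi : i ∈ s) (c : ℕ → ℕ → ℝ) :
    ∑ p ∈ s, ∑ q ∈ s with p < q, (Real.sign ((q : ℝ) - i) - Real.sign ((p : ℝ) - i)) * c p q
      = ∑ p ∈ s with p < i, c p i + ∑ q ∈ s with i < q, c i q
        + 2 * ∑ p ∈ s with p < i, ∑ q ∈ s with i < q, c p q := by
  have key : ∀ p q : ℕ, p < q →
      (Real.sign ((q : ℝ) - i) - Real.sign ((p : ℝ) - i)) * c p q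
        = ((if p = i then c p q else 0) + (if q = i then c p q else 0))
          + (if p < i ∧ i < q then 2 * c p q else 0) := by
    intro p q hpq
    simp only [Real.sign_natCast_sub_natCast]
    split_ifs <;> first | (exfalso; omega) | ring
  rw [sum_congr rfl fun p _ => sum_congr rfl fun q hq => key p q (mem_filter.1 hq).2,
    sum_congr rfl fun p _ => sum_add_distrib, sum_add_distrib,
    sum_pairs_ite_eq_add_ite_eq s hi, add_comm (∑ p ∈ s with p < i, c p i)]
  congr 1
  rw [mul_sum, sum_filter]
  refine sum_congr rfl fun p _ => ?_
  by_cases hp : p < i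
  · rw [if_pos hp, mul_sum, sum_filter, sum_filter]
    exact sum_congr rfl fun q _ => by
      by_cases hq : i < q <;> simp [hp, hq, hp.trans]
  · simp [hp]

theorem two_mul_sum_Ico_neg_one_pow_mul_sign {i m : ℕ} (hi : 1 ≤ i) (hm : 1 ≤ m) :
    2 * ∑ p ∈ Ico 1 m, (-1 : ℝ) ^ p * Real.sign ((p : ℝ) - i)
      = 1 - (-1) ^ m * (if m ≤ i then -1 else 1) := by
  induction m, hm using Nat.le_induction with
  | base => simp [hi]
  | succ m hm ih =>
    rw [sum_Ico_succ_top hm, mul_add, ih, pow_succ, Real.sign_natCast_sub_natCast]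
    split_ifs <;> first | (exfalso; omega) | ring

theorem neg_one_pow_mul_sum_lt_sub_sum_gt {N i m : ℕ} (hN : Even N) (hi : i ∈ Icc 1 N)
    (hm : m ∈ Icc 1 N) :
    (-1 : ℝ) ^ m * (∑ p ∈ Icc 1 N with p < m, (-1) ^ p * Real.sign ((p : ℝ) - i)
        - ∑ q ∈ Icc 1 N with m < q, (-1) ^ q * Real.sign ((q : ℝ) - i))
      = if m = i then 1 else 0 := by
  rw [mem_Icc] at hi hm
  have hlt : {p ∈ Icc 1 N | p < m} = Ico 1 m := by ext; simp; omega
  have htotal := add_sum_erase (Icc 1 N) (fun p => (-1 : ℝ) ^ p * Real.sign ((p : ℝ) - i))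
    (mem_Icc.2 hm)
  rw [sum_erase_eq_sum_filter_lt_add_sum_filter_gt, hlt] at htotal
  rw [hlt]
  have hprefix := two_mul_sum_Ico_neg_one_pow_mul_sign hi.1 hm.1
  have hfull := two_mul_sum_Ico_neg_one_pow_mul_sign hi.1 (m := N + 1) (by omega)
  rw [Ico_add_one_right_eq_Icc, pow_succ, hN.neg_one_pow, if_neg (by omega)] at hfull
  have hsq : ((-1 : ℝ) ^ m) ^ 2 = 1 := by rw [← pow_mul, mul_comm, pow_mul]; simp
  rw [Real.sign_natCast_sub_natCast] at htotal
  split_ifs at htotal hprefix ⊢ <;> first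
    | (exfalso; omega)
    | linear_combination (-1 : ℝ) ^ m * (hprefix - htotal - hfull / 2)
    | linear_combination (-1 : ℝ) ^ m * (hprefix - htotal - hfull / 2) + hsq

theorem sum_pairs_neg_one_pow_mul_sign {N i : ℕ} (hN : Even N) (hi : i ∈ Icc 1 N) (b : ℕ → ℝ) :
    ∑ p ∈ Icc 1 N, ∑ q ∈ Icc 1 N with p < q,
        (-1) ^ (p + q) * (Real.sign ((p : ℝ) - i) * b q - Real.sign ((q : ℝ) - i) * b p)
      = b i := by
  let g : ℕ → ℝ := fun p => (-1) ^ p * Real.sign ((p : ℝ) - i)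
  calc _ = ∑ p ∈ Icc 1 N, ∑ q ∈ Icc 1 N with p < q,
          ((-1) ^ p * b p * -g q + (-1) ^ q * b q * g p) :=
        sum_congr rfl fun p _ => sum_congr rfl fun q _ => by simp only [g, pow_add]; ring
    _ = ∑ m ∈ Icc 1 N, b m * ((-1) ^ m * (∑ p ∈ Icc 1 N with p < m, g p
          - ∑ q ∈ Icc 1 N with m < q, g q)) := by
        rw [← sum_mul_add_sum_filter_lt]
        exact sum_congr rfl fun m _ => by rw [sum_neg_distrib]; ring
    _ = b i := by
        rw [sum_congr rfl fun m hm => by rw [neg_one_pow_mul_sum_lt_sub_sum_gt hN hi hm]]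
        simp [hi]

theorem sum_sign_mul_partialINordered {N i : ℕ} (hN : Even N) (hi : i ∈ Icc 1 N) (a y : ℕ → ℝ) :
    ∑ j ∈ Icc 1 N, Real.sign ((j : ℝ) - i) * partialINordered N a y j
      = a i ^ 2 + 3 * (∑ p ∈ Icc 1 N with p < i, a p * a i * Real.exp (-(y p - y i))
        + ∑ q ∈ Icc 1 N with i < q, a i * a q * Real.exp (-(y i - y q))
        + 2 * ∑ p ∈ Icc 1 N with p < i, ∑ q ∈ Icc 1 N with i < q,
            a p * a q * Real.exp (-(y p - y q))) := by
  unfold partialINordered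
  rw [sum_mul_add_sum_filter_lt, ← sum_pairs_neg_one_pow_mul_sign hN hi (fun p => a p ^ 2),
    ← sum_pairs_sign_sub_sign_mul _ hi fun p q => a p * a q * Real.exp (-(y p - y q)),
    mul_sum, ← sum_add_distrib]
  refine sum_congr rfl fun p _ => ?_
  rw [mul_sum, ← sum_add_distrib]
  exact sum_congr rfl fun q _ => by ring

theorem mCH_even_peakon_hamiltonian_general
    (N : ℕ) (hNeven : Even N)
    (a : ℕ → ℝ) (x : ℕ → ℝ → ℝ) (J : Set ℝ)
    (horder : ∀ t ∈ J, ∀ i ∈ Finset.Icc 1 N, ∀ j ∈ Finset.Icc 1 N, i < j →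
      x j t < x i t)
    (heom : ∀ t ∈ J, ∀ i ∈ Finset.Icc 1 N,
      HasDerivAt (x i)
        ((2/3) * a i ^ 2
          + 2 * a i * ∑ j ∈ (Finset.Icc 1 N).erase i,
              a j * Real.exp (-|x i t - x j t|)
          + 4 * ∑ j ∈ (Finset.Icc 1 N).filter (fun j => j < i),
              ∑ k ∈ (Finset.Icc 1 N).filter (fun k => i < k),
                a j * a k * Real.exp (-(x j t - x k t))) t) :
    ∀ t ∈ J, ∀ i ∈ Finset.Icc 1 N, ∀ D : ℕ → ℝ,
      (∀ j ∈ Finset.Icc 1 N,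
        HasDerivAt (fun s => INordered N a (Function.update (fun l => x l t) j s))
          (D j) (x j t)) →
      HasDerivAt (x i)
        ((2/3) * ∑ j ∈ Finset.Icc 1 N, Real.sign (x i t - x j t) * D j) t := by
  intro t ht i hi D hD
  have hgradient : ∀ j ∈ Icc 1 N, Real.sign (x i t - x j t) * D j
      = Real.sign ((j : ℝ) - i) * partialINordered N a (fun l => x l t) j := fun j hj => by
    rw [sign_sub_eq_sign_natCast_sub (horder t ht) hi hj,
      (hD j hj).unique (hasDerivAt_INordered_update N a _ hj)]
  have hneighbours : a i * ∑ j ∈ (Icc 1 N).erase i, a j * Real.exp (-|x i t - x j t|)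
      = ∑ p ∈ Icc 1 N with p < i, a p * a i * Real.exp (-(x p t - x i t))
        + ∑ q ∈ Icc 1 N with i < q, a i * a q * Real.exp (-(x i t - x q t)) := by
    rw [sum_erase_eq_sum_filter_lt_add_sum_filter_gt, mul_add, mul_sum, mul_sum]
    congr 1 <;> refine sum_congr rfl fun j hj => ?_ <;> obtain ⟨hj, hji⟩ := mem_filter.1 hj
    · rw [abs_of_neg (sub_neg.2 (horder t ht j hj i hi hji)), neg_sub]; ring
    · rw [abs_of_pos (sub_pos.2 (horder t ht i hi j hj hji))]; ring
  convert heom t ht i hi using 1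
  rw [sum_congr rfl hgradient, sum_sign_mul_partialINordered hNeven hi]
  linear_combination (-2 : ℝ) * hneighbours

/-- For even `N ≥ 2`, the ordered mCH `N`-peakon system is
Hamiltonian with Hamiltonian `H = (4/3) I_N` and Poisson bracket
`{xᵢ, xⱼ} = (1/2) sgn(xᵢ - xⱼ)`: for each `i` and `t ∈ J`,
`ẋᵢ(t) = (2/3) ∑ⱼ sgn(xᵢ(t) - xⱼ(t)) ∂I_N/∂xⱼ(x(t))`, where `D j` denotes the
partial derivative `∂I_N/∂xⱼ` evaluated at `(x₁(t),…,x_N(t))`. -/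
theorem mCH_even_peakon_hamiltonian
    (N : ℕ) (hN : 2 ≤ N) (hNeven : Even N)
    (a : ℕ → ℝ) (x : ℕ → ℝ → ℝ) (J : Set ℝ)
    (hJopen : IsOpen J) (hJconn : J.OrdConnected)
    (horder : ∀ t ∈ J, ∀ i ∈ Finset.Icc 1 N, ∀ j ∈ Finset.Icc 1 N, i < j →
      x j t < x i t)
    (heom : ∀ t ∈ J, ∀ i ∈ Finset.Icc 1 N,
      HasDerivAt (x i)
        ((2/3) * a i ^ 2
          + 2 * a i * ∑ j ∈ (Finset.Icc 1 N).erase i,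
              a j * Real.exp (-|x i t - x j t|)
          + 4 * ∑ j ∈ (Finset.Icc 1 N).filter (fun j => j < i),
              ∑ k ∈ (Finset.Icc 1 N).filter (fun k => i < k),
                a j * a k * Real.exp (-(x j t - x k t))) t) :
    ∀ t ∈ J, ∀ i ∈ Finset.Icc 1 N, ∀ D : ℕ → ℝ,
      (∀ j ∈ Finset.Icc 1 N,
        HasDerivAt (fun s => INordered N a (Function.update (fun l => x l t) j s))
          (D j) (x j t)) →
      HasDerivAt (x i)
        ((2/3) * ∑ j ∈ Finset.Icc 1 N, Real.sign (x i t - x j t) * D j) t :=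
  mCH_even_peakon_hamiltonian_general N hNeven a x J horder heom
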